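/- arXiv:math/0001053 — 3 statements merged into one kernel-verified Lean document; each statement's English description precedes it below -/
import Mathlib

section
/- For n ≥ 5, the number of cd-words of degree n that are of the form c^i d c^j with min{i,j} ≤ 1, or of the form c^i d c d ⋯ c d c^j with at least two d's alternating with single c's between consecutive d's, equals ⌊C(n-2,2)/3⌋ + 4. -/
/-- The degree of a cd-word, encoded as a list of booleans
(`false` = `c`, degree 1; `true` = `d`, degree 2). -/
def cdDeg (w : List Bool) : ℕ := (w.map fun b => if b then 2 else 1).sum

/-- `w` has the form `c^i d c^j` with `min i j ≤ 1`. -/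
def TypeA (w : List Bool) : Prop :=
  ∃ i j : ℕ, min i j ≤ 1 ∧
    w = List.replicate i false ++ [true] ++ List.replicate j false

/-- `w` has the form `c^i d (c d)^{r-1} c^j` with `r ≥ 2` d's alternating with
single c's. -/
def TypeB (w : List Bool) : Prop :=
  ∃ i r j : ℕ, 2 ≤ r ∧
    w = List.replicate i false ++ [true] ++
        (List.replicate (r - 1) [false, true]).flatten ++ List.replicate j false

/-!
Every word of either form is `c^i d (c d)^k c^j` for a unique triple `(i, k, j)`, and its degree
is `i + 3k + j + 2`. For `n = m + 5` the first form contributes exactly the four words with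
`i ∈ {0, 1, m + 2, m + 3}` and `k = 0`, while the second form is in bijection with the solutions
of `i + 3k + j = m`. Splitting off the solutions with `k = 0` shows that their number `f m`
satisfies `f (m + 3) = f m + (m + 4)`, whence `f m = ⌊(m + 3)(m + 2) / 6⌋ = ⌊C(n - 2, 2) / 3⌋`.
-/

open Finset

def cdWord (i k j : ℕ) : List Bool :=
  List.replicate i false ++ [true] ++ (List.replicate k [false, true]).flatten ++
    List.replicate j false

theorem cdDeg_cdWord (i k j : ℕ) : cdDeg (cdWord i k j) = i + 3 * k + j + 2 := by
  simp [cdDeg, cdWord, List.sum_flatten]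
  omega

theorem cdWord_inj {i k j i' k' j' : ℕ} :
    cdWord i k j = cdWord i' k' j' ↔ i = i' ∧ k = k' ∧ j = j' := by
  refine ⟨fun h => ?_, by rintro ⟨rfl, rfl, rfl⟩; rfl⟩
  have hlead : i = i' := by
    simpa [cdWord] using congrArg (fun w => (w.takeWhile (· == false)).length) h
  have hd : k = k' := by
    simpa [cdWord, List.count_flatten, List.count_replicate] using congrArg (List.count true) h
  have hlen := congrArg List.length h
  simp [cdWord] at hlen
  omega

theorem typeA_iff {w : List Bool} : TypeA w ↔ ∃ i j, min i j ≤ 1 ∧ w = cdWord i 0 j := by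
  simp [TypeA, cdWord]

theorem typeB_iff {w : List Bool} : TypeB w ↔ ∃ i k j, w = cdWord i (k + 1) j := by
  constructor
  · rintro ⟨i, r, j, hr, rfl⟩
    exact ⟨i, r - 2, j, by rw [show r - 2 + 1 = r - 1 by omega]; rfl⟩
  · rintro ⟨i, k, j, rfl⟩
    exact ⟨i, k + 2, j, by omega, rfl⟩

def tripleSolutions (m : ℕ) : Finset (ℕ × ℕ × ℕ) :=
  (range (m + 1) ×ˢ range (m + 1) ×ˢ range (m + 1)).filter fun p => p.1 + 3 * p.2.1 + p.2.2 = m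

@[simp]
theorem mem_tripleSolutions {m : ℕ} {p : ℕ × ℕ × ℕ} :
    p ∈ tripleSolutions m ↔ p.1 + 3 * p.2.1 + p.2.2 = m := by
  simp only [tripleSolutions, mem_filter, mem_product, mem_range]
  omega

theorem card_tripleSolutions_add_three (m : ℕ) :
    #(tripleSolutions (m + 3)) = #(tripleSolutions m) + (m + 4) := by
  rw [← card_filter_add_card_filter_not (fun p => p.2.1 ≠ 0), ← Nat.card_antidiagonal (m + 3)]
  congr 1
  · refine card_nbij' (fun p => (p.1, p.2.1 - 1, p.2.2)) (fun p => (p.1, p.2.1 + 1, p.2.2))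
      ?_ ?_ ?_ ?_ <;> intro p <;> simp [Prod.ext_iff] <;> omega
  · refine card_nbij' (fun p => (p.1, p.2.2)) (fun q => (q.1, 0, q.2))
      ?_ ?_ ?_ ?_ <;> intro p <;> simp [Prod.ext_iff] <;> omega

theorem card_tripleSolutions (m : ℕ) : #(tripleSolutions m) = (m + 3) * (m + 2) / 6 := by
  induction m using Nat.strong_induction_on with
  | _ m ih =>
    match m with
    | 0 | 1 | 2 => decide
    | m + 3 =>
      rw [card_tripleSolutions_add_three, ih m (by omega)]
      have : (m + 3 + 3) * (m + 3 + 2) = (m + 3) * (m + 2) + (m + 4) * 6 := by ring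
      rw [this, Nat.add_mul_div_right _ _ (by norm_num)]

theorem setOf_cdDeg_typeA (m : ℕ) :
    {w | cdDeg w = m + 5 ∧ TypeA w} =
      {cdWord 0 0 (m + 3), cdWord 1 0 (m + 2), cdWord (m + 2) 0 1, cdWord (m + 3) 0 0} := by
  ext w
  simp only [Set.mem_ofPred_eq, typeA_iff, Set.mem_insert_iff, Set.mem_singleton_iff]
  constructor
  · rintro ⟨hdeg, i, j, hij, rfl⟩
    rw [cdDeg_cdWord] at hdeg
    simp only [cdWord_inj, true_and]
    omega
  · rintro (rfl | rfl | rfl | rfl) <;>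
      exact ⟨(cdDeg_cdWord _ _ _).trans (by omega), _, _, by omega, rfl⟩

theorem ncard_cdDeg_typeA (m : ℕ) : {w | cdDeg w = m + 5 ∧ TypeA w}.ncard = 4 := by
  rw [setOf_cdDeg_typeA, Set.ncard_eq_four]
  refine ⟨_, _, _, _, ?_, ?_, ?_, ?_, ?_, ?_, rfl⟩ <;> simp only [ne_eq, cdWord_inj] <;> omega

theorem setOf_cdDeg_typeB (m : ℕ) :
    {w | cdDeg w = m + 5 ∧ TypeB w} =
      (fun p : ℕ × ℕ × ℕ => cdWord p.1 (p.2.1 + 1) p.2.2) '' ↑(tripleSolutions m) := by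
  ext w
  simp only [Set.mem_ofPred_eq, typeB_iff, Set.mem_image, Finset.mem_coe, mem_tripleSolutions,
    Prod.exists]
  constructor
  · rintro ⟨hdeg, i, k, j, rfl⟩
    rw [cdDeg_cdWord] at hdeg
    exact ⟨i, k, j, by omega, rfl⟩
  · rintro ⟨i, k, j, hsum, rfl⟩
    exact ⟨by rw [cdDeg_cdWord]; omega, i, k, j, rfl⟩

theorem ncard_cdDeg_typeB (m : ℕ) :
    {w | cdDeg w = m + 5 ∧ TypeB w}.ncard = (m + 3) * (m + 2) / 6 := by
  rw [setOf_cdDeg_typeB, Set.ncard_image_of_injective, Set.ncard_coe_finset,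
    card_tripleSolutions]
  intro p q h
  simp only [cdWord_inj, add_left_inj] at h
  exact Prod.ext h.1 (Prod.ext h.2.1 h.2.2)

theorem not_typeA_and_typeB {w : List Bool} : ¬ (TypeA w ∧ TypeB w) := by
  rintro ⟨hA, hB⟩
  obtain ⟨i, j, -, rfl⟩ := typeA_iff.1 hA
  obtain ⟨i', k, j', h⟩ := typeB_iff.1 hB
  simp [cdWord_inj] at h

/-- For `n ≥ 5`, the number of cd-words of degree `n` of the special forms
`c^i d c^j` (with `min i j ≤ 1`) or `c^i d c d ⋯ c d c^j` (at least two `d`'s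
alternating with `c`'s) is `⌊C(n-2,2)/3⌋ + 4`. -/
theorem card_special_cd_words (n : ℕ) (hn : 5 ≤ n) :
    {w : List Bool | cdDeg w = n ∧ (TypeA w ∨ TypeB w)}.ncard
      = (n - 2).choose 2 / 3 + 4 := by
  obtain ⟨m, rfl⟩ : ∃ m, n = m + 5 := ⟨n - 5, by omega⟩
  have hsplit : {w | cdDeg w = m + 5 ∧ (TypeA w ∨ TypeB w)} =
      {w | cdDeg w = m + 5 ∧ TypeA w} ∪ {w | cdDeg w = m + 5 ∧ TypeB w} :=
    Set.ext fun _ => and_or_left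
  have hdisj : Disjoint {w | cdDeg w = m + 5 ∧ TypeA w} {w | cdDeg w = m + 5 ∧ TypeB w} :=
    Set.disjoint_left.2 fun w hA hB => not_typeA_and_typeB ⟨hA.2, hB.2⟩
  rw [hsplit, Set.ncard_union_eq hdisj (setOf_cdDeg_typeA m ▸ Set.toFinite _)
    (setOf_cdDeg_typeB m ▸ Set.toFinite _), ncard_cdDeg_typeA, ncard_cdDeg_typeB,
    Nat.choose_two_right, Nat.div_div_eq_div_mul, show m + 5 - 2 = m + 3 by omega, add_comm]
  rfl
end

section
/- Let w be a cd-word of degree n containing r copies of d. When each d in an 'Eulerian' ce-word v_Q (Q an even subset of [1,n]) is produced by expanding consecutive pairs ee as cc − 2d, the cd-word w occurs in the expansion of v_Q if and only if supp(w) ⊆_e Q; consequently, for an Eulerian poset with ce-index coefficients (L_Q), the cd-index coefficient of w is [w] = (−2)^r Σ_{supp(w) ⊆_e Q} L_Q. -/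
open Finset
open scoped Classical

/-- Noncommutative polynomials in `c`, `d` over `ℚ` (`false` = `c`, degree 1;
`true` = `d`, degree 2). -/
abbrev CDRing : Type := MonoidAlgebra ℚ (FreeMonoid Bool)

/-- Noncommutative polynomials in `c`, `e` over `ℚ` (`false` = `c`,
`true` = `e`). -/
abbrev CERing : Type := MonoidAlgebra ℚ (FreeMonoid Bool)

/-- Number of `d`'s in a cd-word. -/
def dCount (w : List Bool) : ℕ := w.count true

/-- The set of positions (starting at `p`) occupied by the `d`'s of a cd-word;
each `d` occupies two consecutive positions. -/
def dSupp : List Bool → ℕ → Finset ℕ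
  | [], _ => ∅
  | false :: t, p => dSupp t (p + 1)
  | true :: t, p => {p, p + 1} ∪ dSupp t (p + 2)

/-- The image of a cd-word in `ℚ⟨c,e⟩` under `c ↦ c`, `d ↦ (cc − ee)/2`. -/
noncomputable def cdWordToCE : List Bool → CERing
  | [] => 1
  | false :: t => MonoidAlgebra.single (FreeMonoid.ofList [false]) 1 * cdWordToCE t
  | true :: t =>
      ((2 : ℚ)⁻¹ • (MonoidAlgebra.single (FreeMonoid.ofList [false, false]) (1 : ℚ)
        - MonoidAlgebra.single (FreeMonoid.ofList [true, true]) (1 : ℚ))) *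
        cdWordToCE t

/-- The linear extension of `cdWordToCE` to `ℚ⟨c,d⟩`: the substitution
`c ↦ c`, `d ↦ (cc − ee)/2`. -/
noncomputable def ceMap (Φ : CDRing) : CERing :=
  Φ.coeff.sum fun w a => a • cdWordToCE (FreeMonoid.toList w)

/-- The ce-word `v_Q` of length `n` (`e`'s exactly at the positions of
`Q ⊆ [1,n]`). -/
noncomputable def ceWord (n : ℕ) (Q : Finset ℕ) : CERing :=
  MonoidAlgebra.single
    (FreeMonoid.ofList ((List.range n).map fun i => decide ((i + 1) ∈ Q))) 1

/-- A finset of naturals is an interval if it is `Finset.Icc a b`. -/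
def IsInterval (J : Finset ℕ) : Prop := ∃ a b : ℕ, J = Finset.Icc a b

/-- An even set: a disjoint union of intervals, each of even cardinality. -/
def IsEvenSet (Q : Finset ℕ) : Prop :=
  ∃ 𝒥 : Finset (Finset ℕ), (∀ J ∈ 𝒥, IsInterval J ∧ Even J.card) ∧
    (𝒥 : Set (Finset ℕ)).PairwiseDisjoint id ∧ Q = 𝒥.sup id

/-- `Q` evenly contains `S`, written `S ⊆ₑ Q`. -/
def EvenlyContains (S Q : Finset ℕ) : Prop :=
  IsEvenSet S ∧ IsEvenSet Q ∧ S ⊆ Q ∧ IsEvenSet (Q \ S)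

/-!
Replacing each `ee` by `cc − 2d` and sending every word with an `e` outside such a pair to `0`
defines a linear map `ℚ⟨c,e⟩ → ℚ⟨c,d⟩` that is a left inverse of the substitution
`d ↦ (cc − ee)/2`; so the cd-index is obtained by applying it to `∑ L_Q v_Q`. The expansion of
`v_Q` chooses `cc` or `−2d` for each pair of a splitting of `Q` into consecutive pairs, hence `w`
occurs in it iff its `d`s sit on some of these pairs and the remaining `e`s split into pairs
as well, i.e. iff `supp(w) ⊆ₑ Q`. To match this with even sets defined through intervals,
evenness is recast as "every gap of `Q` is preceded by an even number of elements of `Q`", a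
condition that is unchanged when a leading pair `{p, p + 1}` is removed.
-/

open MonoidAlgebra (single)
open FreeMonoid (ofList)

noncomputable def cdExpand : List Bool → CDRing
  | [] => 1
  | false :: t => single (ofList [false]) 1 * cdExpand t
  | true :: true :: t => (single (ofList [false, false]) 1 - single (ofList [true]) 2) * cdExpand t
  | _ => 0

noncomputable def cdExpandLin : CERing →ₗ[ℚ] CDRing :=
  Finsupp.linearCombination ℚ (fun u : FreeMonoid Bool => cdExpand u.toList) ∘ₗ
    (MonoidAlgebra.coeffLinearEquiv ℚ).toLinearMap

lemma cdExpandLin_single (u : FreeMonoid Bool) (a : ℚ) :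
    cdExpandLin (single u a) = a • cdExpand u.toList := by
  simp [cdExpandLin]

lemma cdExpandLin_single_mul {l : List Bool} {D : CDRing}
    (h : ∀ t, cdExpand (l ++ t) = D * cdExpand t) (X : CERing) :
    cdExpandLin (single (ofList l) 1 * X) = D * cdExpandLin X := by
  induction X using MonoidAlgebra.induction_linear with
  | zero => simp
  | add f g hf hg => rw [mul_add, map_add, hf, hg, map_add, mul_add]
  | single u b =>
    rw [MonoidAlgebra.single_mul_single, one_mul, cdExpandLin_single, cdExpandLin_single,
      mul_smul_comm, ← h]
    rfl

lemma cdExpandLin_cdWordToCE (l : List Bool) :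
    cdExpandLin (cdWordToCE l) = single (ofList l) 1 := by
  induction l with
  | nil => simp [cdWordToCE, cdExpand, MonoidAlgebra.one_def, cdExpandLin_single]
  | cons b t ih =>
    cases b with
    | false =>
      rw [cdWordToCE, cdExpandLin_single_mul (fun _ => rfl), ih, MonoidAlgebra.single_mul_single,
        one_mul]
      rfl
    | true =>
      have hcc : ∀ t, cdExpand ([false, false] ++ t) =
          single (ofList [false, false]) 1 * cdExpand t := fun t => by
        rw [List.cons_append, cdExpand, List.singleton_append, cdExpand, ← mul_assoc,
          MonoidAlgebra.single_mul_single, one_mul]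
        rfl
      rw [cdWordToCE, smul_mul_assoc, sub_mul, map_smul, map_sub,
        cdExpandLin_single_mul hcc, cdExpandLin_single_mul (fun _ => rfl), ih, ← sub_mul,
        sub_sub_cancel, MonoidAlgebra.single_mul_single, MonoidAlgebra.smul_single']
      norm_num

lemma ceMap_single (u : FreeMonoid Bool) (a : ℚ) :
    ceMap (single u a) = a • cdWordToCE u.toList :=
  Finsupp.sum_single_index (zero_smul _ _)

lemma cdExpandLin_ceMap (Φ : CDRing) : cdExpandLin (ceMap Φ) = Φ := by
  induction Φ using MonoidAlgebra.induction_linear with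
  | zero => simp [ceMap]
  | add f g hf hg =>
    rw [show ceMap (f + g) = ceMap f + ceMap g from
      Finsupp.sum_add_index' (fun _ => zero_smul _ _) (fun _ a b => add_smul a b _),
      map_add, hf, hg]
  | single u b =>
    rw [ceMap_single, map_smul, cdExpandLin_cdWordToCE, FreeMonoid.ofList_toList,
      MonoidAlgebra.smul_single', mul_one]

lemma coeff_single_mul_ofList {R α : Type*} [Semiring R] (l w : List α) (r : R)
    (f : MonoidAlgebra R (FreeMonoid α)) :
    (single (ofList l) r * f).coeff (ofList w) =
      if l <+: w then r * f.coeff (ofList (w.drop l.length)) else 0 := by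
  split_ifs with h
  · obtain ⟨t, rfl⟩ := h
    rw [List.drop_left]
    exact MonoidAlgebra.coeff_single_mul_eq_mul_coeff (ofList t) fun a _ => by
      rw [FreeMonoid.ofList_append]; exact mul_right_inj _
  · exact MonoidAlgebra.coeff_single_mul_of_forall_mul_ne r f fun d hd =>
      h ⟨d.toList, by simpa using congrArg FreeMonoid.toList hd⟩

def expandsTo : List Bool → List Bool → Bool
  | [], [] => true
  | false :: u, false :: w => expandsTo u w
  | true :: true :: u, true :: w => expandsTo u w
  | true :: true :: u, false :: false :: w => expandsTo u w
  | _, _ => false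

lemma coeff_cdExpand :
    ∀ u w : List Bool,
      (cdExpand u).coeff (ofList w) = if expandsTo u w then (-2 : ℚ) ^ dCount w else 0
  | [], w => by
    cases w <;>
      simp [cdExpand, expandsTo, dCount, MonoidAlgebra.one_def, MonoidAlgebra.coeff_single]
  | false :: u, w => by
    rw [cdExpand, coeff_single_mul_ofList]
    rcases w with _ | ⟨_ | _, w⟩ <;> simp [expandsTo, coeff_cdExpand u, dCount]
  | true :: true :: u, w => by
    rw [cdExpand, sub_mul, MonoidAlgebra.coeff_sub, Finsupp.sub_apply, coeff_single_mul_ofList,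
      coeff_single_mul_ofList]
    rcases w with _ | ⟨_ | _, w⟩
    · simp [expandsTo]
    · rcases w with _ | ⟨_ | _, w⟩ <;> simp [expandsTo, coeff_cdExpand u, dCount]
    · simp [expandsTo, coeff_cdExpand u, dCount, pow_succ]
      split_ifs <;> ring
  | [true], w => by simp [cdExpand, expandsTo]
  | true :: false :: u, w => by simp [cdExpand, expandsTo]

lemma inter_Iio_eq_empty {α : Type*} [LinearOrder α] [LocallyFiniteOrderBot α] {s : Finset α}
    {a : α} (hs : ∀ x ∈ s, a ≤ x) : s ∩ Iio a = ∅ := by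
  ext x
  simpa using hs x

lemma card_pair_union_inter_Iio {Q : Finset ℕ} {p q : ℕ} (hQ : ∀ x ∈ Q, p + 2 ≤ x)
    (hq : p + 2 ≤ q) : #(({p, p + 1} ∪ Q) ∩ Iio q) = #(Q ∩ Iio q) + 2 := by
  have hpair : {p, p + 1} ⊆ Iio q := by
    intro x hx
    simp only [mem_insert, mem_singleton, mem_Iio] at hx ⊢
    omega
  rw [union_inter_distrib_right, inter_eq_left.mpr hpair, card_union_of_disjoint,
    card_pair (by omega), add_comm]
  rw [disjoint_left]
  intro x hx hxQ
  have := hQ x (mem_of_mem_inter_left hxQ)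
  simp only [mem_insert, mem_singleton] at hx
  omega

def EvenBeforeGaps (Q : Finset ℕ) : Prop := ∀ q ∉ Q, Even #(Q ∩ Iio q)

lemma evenBeforeGaps_empty : EvenBeforeGaps ∅ := by
  simp [EvenBeforeGaps]

lemma evenBeforeGaps_pair_union_iff {Q : Finset ℕ} {p : ℕ} (hQ : ∀ x ∈ Q, p + 2 ≤ x) :
    EvenBeforeGaps ({p, p + 1} ∪ Q) ↔ EvenBeforeGaps Q := by
  constructor
  · intro h q hq
    rcases lt_or_ge q (p + 2) with hlt | hge
    · simp [inter_Iio_eq_empty fun x hx => hlt.le.trans (hQ x hx)]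
    · have hq' : q ∉ {p, p + 1} ∪ Q := by simp [hq]; omega
      have := h q hq'
      rw [card_pair_union_inter_Iio hQ hge] at this
      exact (Nat.even_add.mp this).mpr even_two
  · intro h q hq
    simp only [mem_union, mem_insert, mem_singleton, not_or] at hq
    rcases lt_or_ge q (p + 2) with hlt | hge
    · have hempty : ({p, p + 1} ∪ Q) ∩ Iio q = ∅ := inter_Iio_eq_empty fun x hx => by
        simp only [mem_union, mem_insert, mem_singleton] at hx
        rcases hx with (rfl | rfl) | hx <;> grind
      rw [hempty, card_empty]
      exact Even.zero
    · rw [card_pair_union_inter_Iio hQ hge]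
      exact (h q hq.2).add even_two

lemma EvenBeforeGaps.succ_mem {Q : Finset ℕ} {p : ℕ} (h : EvenBeforeGaps Q)
    (hQ : ∀ x ∈ Q, p ≤ x) (hp : p ∈ Q) : p + 1 ∈ Q := by
  by_contra hp1
  have hpre : Q ∩ Iio (p + 1) = {p} := by
    ext x
    have := hQ x
    simp only [mem_inter, mem_Iio, mem_singleton]
    constructor
    · rintro ⟨hx, hlt⟩
      have := this hx
      omega
    · rintro rfl
      exact ⟨hp, by omega⟩
  have := h (p + 1) hp1
  rw [hpre, card_singleton] at this
  exact Nat.not_even_one this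

lemma even_card_Icc_inter_Iio {a b q : ℕ} (heven : Even #(Icc a b)) (hq : q ∉ Icc a b) :
    Even #(Icc a b ∩ Iio q) := by
  rw [mem_Icc, not_and_or, not_le, not_le] at hq
  rcases hq with hq | hq
  · simp [inter_Iio_eq_empty fun x hx => hq.le.trans (mem_Icc.mp hx).1]
  · rwa [inter_eq_left.mpr fun x hx => mem_Iio.mpr ((mem_Icc.mp hx).2.trans_lt hq)]

lemma IsEvenSet.evenBeforeGaps {Q : Finset ℕ} (h : IsEvenSet Q) : EvenBeforeGaps Q := by
  obtain ⟨𝒥, h𝒥, hdisj, rfl⟩ := h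
  intro q hq
  rw [sup_eq_biUnion, biUnion_inter, card_biUnion fun J hJ K hK hJK =>
    (hdisj hJ hK hJK).mono inter_subset_left inter_subset_left]
  refine even_sum _ fun J hJ => ?_
  obtain ⟨⟨a, b, rfl⟩, heven⟩ := h𝒥 J hJ
  exact even_card_Icc_inter_Iio heven fun hqJ => hq (le_sup (f := id) hJ hqJ)

lemma isEvenSet_empty : IsEvenSet ∅ :=
  ⟨∅, by simp, by simp, rfl⟩

lemma isEvenSet_pair (p : ℕ) : IsEvenSet {p, p + 1} := by
  have hIcc : Icc p (p + 1) = {p, p + 1} := by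
    ext x
    simp only [mem_Icc, mem_insert, mem_singleton]
    omega
  refine ⟨{Icc p (p + 1)}, ?_, by simp, by simp [hIcc]⟩
  simp only [mem_singleton, forall_eq, hIcc, card_pair (by omega : p ≠ p + 1)]
  exact ⟨⟨p, p + 1, hIcc.symm⟩, even_two⟩

lemma IsEvenSet.union {A B : Finset ℕ} (hA : IsEvenSet A) (hB : IsEvenSet B)
    (hAB : Disjoint A B) : IsEvenSet (A ∪ B) := by
  obtain ⟨𝒜, h𝒜, h𝒜disj, rfl⟩ := hA
  obtain ⟨ℬ, hℬ, hℬdisj, rfl⟩ := hB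
  refine ⟨𝒜 ∪ ℬ, fun J hJ => (mem_union.mp hJ).elim (h𝒜 J) (hℬ J), ?_, sup_union.symm⟩
  rw [coe_union]
  exact h𝒜disj.union hℬdisj fun J hJ K hK _ =>
    hAB.mono (le_sup (f := id) hJ) (le_sup (f := id) hK)

lemma EvenBeforeGaps.isEvenSet {Q : Finset ℕ} (h : EvenBeforeGaps Q) : IsEvenSet Q := by
  induction hcard : #Q using Nat.strong_induction_on generalizing Q with
  | _ k ih =>
  rcases Q.eq_empty_or_nonempty with rfl | hne
  · exact isEvenSet_empty
  set m := Q.min' hne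
  have hmin : ∀ x ∈ Q, m ≤ x := fun x hx => Q.min'_le x hx
  have hm : m ∈ Q := Q.min'_mem hne
  have hpair : {m, m + 1} ⊆ Q :=
    insert_subset hm (singleton_subset_iff.mpr (h.succ_mem hmin hm))
  have hrest : ∀ x ∈ Q \ {m, m + 1}, m + 2 ≤ x := by
    intro x hx
    simp only [mem_sdiff, mem_insert, mem_singleton, not_or] at hx
    have := hmin x hx.1
    omega
  rw [← union_sdiff_of_subset hpair] at h ⊢
  refine (isEvenSet_pair m).union ?_ disjoint_sdiff
  refine ih _ ?_ ((evenBeforeGaps_pair_union_iff hrest).mp h) rfl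
  rw [← hcard, card_sdiff_of_subset hpair, card_pair (by omega)]
  have := card_le_card hpair
  rw [card_pair (by omega)] at this
  omega

lemma isEvenSet_iff_evenBeforeGaps {Q : Finset ℕ} : IsEvenSet Q ↔ EvenBeforeGaps Q :=
  ⟨IsEvenSet.evenBeforeGaps, EvenBeforeGaps.isEvenSet⟩

def ePositions : List Bool → ℕ → Finset ℕ
  | [], _ => ∅
  | false :: t, p => ePositions t (p + 1)
  | true :: t, p => insert p (ePositions t (p + 1))

lemma le_of_mem_ePositions {u : List Bool} {p x : ℕ} (hx : x ∈ ePositions u p) : p ≤ x := by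
  induction u generalizing p with
  | nil => simp [ePositions] at hx
  | cons b t ih =>
    cases b with
    | false => exact (ih hx).trans' p.le_succ
    | true =>
      rcases mem_insert.mp hx with rfl | hx
      · rfl
      · exact (ih hx).trans' p.le_succ

lemma le_of_mem_dSupp {w : List Bool} {p x : ℕ} (hx : x ∈ dSupp w p) : p ≤ x := by
  induction w generalizing p with
  | nil => simp [dSupp] at hx
  | cons b t ih =>
    cases b with
    | false => exact (ih hx).trans' p.le_succ
    | true =>
      simp only [dSupp, mem_union, mem_insert, mem_singleton] at hx
      rcases hx with (rfl | rfl) | hx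
      · rfl
      · exact p.le_succ
      · exact (ih hx).trans' (by omega)

lemma evenBeforeGaps_dSupp (w : List Bool) (p : ℕ) : EvenBeforeGaps (dSupp w p) := by
  induction w generalizing p with
  | nil => exact evenBeforeGaps_empty
  | cons b t ih =>
    cases b with
    | false => exact ih (p + 1)
    | true => exact (evenBeforeGaps_pair_union_iff fun _ => le_of_mem_dSupp).mpr (ih (p + 2))

lemma ePositions_true_true (u : List Bool) (p : ℕ) :
    ePositions (true :: true :: u) p = {p, p + 1} ∪ ePositions u (p + 2) := by
  ext x
  simp [ePositions]

lemma cdDeg_cons (b : Bool) (w : List Bool) :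
    cdDeg (b :: w) = (if b then 2 else 1) + cdDeg w := by
  simp [cdDeg]

/-- `EvenlyContains S Q` with evenness in the form `EvenBeforeGaps` and without the evenness of
`S`, which is automatic for `S = dSupp w p`. -/
def GapEvenlyContains (S Q : Finset ℕ) : Prop :=
  S ⊆ Q ∧ EvenBeforeGaps Q ∧ EvenBeforeGaps (Q \ S)

section PairUnion

variable {S Q : Finset ℕ} {p : ℕ}

lemma gapEvenlyContains_pair_union_pair_union_iff (hS : ∀ x ∈ S, p + 2 ≤ x)
    (hQ : ∀ x ∈ Q, p + 2 ≤ x) :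
    GapEvenlyContains ({p, p + 1} ∪ S) ({p, p + 1} ∪ Q) ↔ GapEvenlyContains S Q := by
  have hsub : {p, p + 1} ∪ S ⊆ {p, p + 1} ∪ Q ↔ S ⊆ Q := by
    simp only [subset_iff, mem_union, mem_insert, mem_singleton]
    grind
  have hdiff : ({p, p + 1} ∪ Q) \ ({p, p + 1} ∪ S) = Q \ S := by
    ext x
    simp only [mem_sdiff, mem_union, mem_insert, mem_singleton]
    grind
  rw [GapEvenlyContains, GapEvenlyContains, hsub, hdiff, evenBeforeGaps_pair_union_iff hQ]

lemma gapEvenlyContains_pair_union_iff (hS : ∀ x ∈ S, p + 2 ≤ x) (hQ : ∀ x ∈ Q, p + 2 ≤ x) :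
    GapEvenlyContains S ({p, p + 1} ∪ Q) ↔ GapEvenlyContains S Q := by
  have hsub : S ⊆ {p, p + 1} ∪ Q ↔ S ⊆ Q := by
    simp only [subset_iff, mem_union, mem_insert, mem_singleton]
    grind
  have hdiff : ({p, p + 1} ∪ Q) \ S = {p, p + 1} ∪ (Q \ S) := by
    ext x
    simp only [mem_sdiff, mem_union, mem_insert, mem_singleton]
    grind
  rw [GapEvenlyContains, GapEvenlyContains, hsub, hdiff, evenBeforeGaps_pair_union_iff hQ,
    evenBeforeGaps_pair_union_iff fun x hx => hQ x (mem_sdiff.mp hx).1]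

end PairUnion

lemma expandsTo_iff :
    ∀ (u w : List Bool) (p : ℕ), u.length = cdDeg w →
      (expandsTo u w ↔ GapEvenlyContains (dSupp w p) (ePositions u p))
  | [], [], p, _ => by
    simp [expandsTo, GapEvenlyContains, ePositions, dSupp, evenBeforeGaps_empty]
  | [], b :: w, p, h => by cases b <;> simp [cdDeg_cons] at h <;> omega
  | b :: u, [], p, h => by simp [cdDeg] at h
  | false :: u, false :: w, p, h =>
    expandsTo_iff u w (p + 1) (by simp [cdDeg_cons] at h; omega)
  | false :: u, true :: w, p, h => by
    simp only [expandsTo, Bool.false_eq_true, false_iff]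
    rintro ⟨hsub, -⟩
    have := le_of_mem_ePositions (u := u) (hsub (by simp [dSupp] : p ∈ dSupp (true :: w) p))
    omega
  | true :: true :: u, true :: w, p, h => by
    rw [ePositions_true_true, show dSupp (true :: w) p = {p, p + 1} ∪ dSupp w (p + 2) from rfl,
      gapEvenlyContains_pair_union_pair_union_iff (fun _ => le_of_mem_dSupp)
        (fun _ => le_of_mem_ePositions)]
    exact expandsTo_iff u w (p + 2) (by simp [cdDeg_cons] at h; omega)
  | true :: true :: u, false :: false :: w, p, h => by
    rw [ePositions_true_true, show dSupp (false :: false :: w) p = dSupp w (p + 2) from rfl,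
      gapEvenlyContains_pair_union_iff (fun _ => le_of_mem_dSupp) (fun _ => le_of_mem_ePositions)]
    exact expandsTo_iff u w (p + 2) (by simp [cdDeg_cons] at h; omega)
  | true :: true :: u, [false], p, h => by simp [cdDeg] at h
  | true :: true :: u, false :: true :: w, p, h => by
    simp only [expandsTo, Bool.false_eq_true, false_iff]
    rintro ⟨-, -, hdiff⟩
    have hp : p ∈ ePositions (true :: true :: u) p \ dSupp (false :: true :: w) p := by
      refine mem_sdiff.mpr ⟨by simp [ePositions], fun hp => ?_⟩
      have := le_of_mem_dSupp (w := true :: w) hp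
      omega
    have := hdiff.succ_mem (fun x hx => le_of_mem_ePositions (mem_sdiff.mp hx).1) hp
    exact (mem_sdiff.mp this).2 (by simp [dSupp])
  | [true], b :: w, p, h => by
    rw [show expandsTo [true] (b :: w) = false from rfl, Bool.false_eq_true, false_iff]
    rintro ⟨-, hQ, -⟩
    have := hQ.succ_mem (fun _ => le_of_mem_ePositions) (by simp [ePositions])
    simp [ePositions] at this
  | true :: false :: u, b :: w, p, h => by
    rw [show expandsTo (true :: false :: u) (b :: w) = false from rfl, Bool.false_eq_true,
      false_iff]
    rintro ⟨-, hQ, -⟩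
    have := hQ.succ_mem (fun _ => le_of_mem_ePositions) (by simp [ePositions])
    simp only [ePositions, mem_insert, Nat.succ_ne_self, false_or] at this
    have := le_of_mem_ePositions this
    omega

lemma ePositions_map_range' (Q : Finset ℕ) (p n : ℕ) :
    ePositions ((List.range' p n).map fun i => decide (i ∈ Q)) p = Q ∩ Ico p (p + n) := by
  induction n generalizing p with
  | zero => simp [ePositions]
  | succ n ih =>
    rw [List.range'_succ, List.map_cons]
    ext x
    by_cases hp : p ∈ Q <;> simp [hp, ePositions, ih] <;> grind

lemma cdExpandLin_ceWord (n : ℕ) (Q : Finset ℕ) :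
    cdExpandLin (ceWord n Q) = cdExpand ((List.range' 1 n).map fun i => decide (i ∈ Q)) := by
  rw [ceWord, cdExpandLin_single, one_smul, List.range'_eq_map_range, List.map_map]
  simp [Function.comp_def, add_comm]

lemma coeff_cdExpandLin_ceWord {n : ℕ} {Q : Finset ℕ} (hQ : Q ⊆ Icc 1 n) {w : List Bool}
    (hw : cdDeg w = n) :
    (cdExpandLin (ceWord n Q)).coeff (ofList w) =
      if EvenlyContains (dSupp w 1) Q then (-2 : ℚ) ^ dCount w else 0 := by
  have hpos : ePositions ((List.range' 1 n).map fun i => decide (i ∈ Q)) 1 = Q := by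
    rw [ePositions_map_range', inter_eq_left]
    exact hQ.trans fun x hx => by simp at hx ⊢; omega
  rw [cdExpandLin_ceWord, coeff_cdExpand]
  refine if_congr ?_ rfl rfl
  rw [expandsTo_iff _ _ 1 (by simp [hw]), hpos]
  simp only [EvenlyContains, GapEvenlyContains, isEvenSet_iff_evenBeforeGaps,
    evenBeforeGaps_dSupp, true_and]
  tauto

/-- (i) A cd-word `w` occurs in the cd-expansion of an Eulerian ce-word `v_Q`
iff `supp(w) ⊆ₑ Q`; its coefficient there is `(−2)^r` (`r` = number of `d`'s in
`w`).  (ii) Consequently, if `Φ` is the cd-index and `(L_Q)` the ce-index of an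
Eulerian poset of rank `n+1` (so `ceMap Φ = ∑_Q L_Q v_Q` with `L_Q = 0` for
non-even `Q`), then `[w]_Φ = (−2)^r ∑_{supp(w) ⊆ₑ Q} L_Q`. -/
theorem cd_coefficient_from_L_vector (n : ℕ) :
    (∀ Q : Finset ℕ, Q ⊆ Finset.Icc 1 n → IsEvenSet Q →
      ∀ Ψ : CDRing, (∀ w ∈ Ψ.coeff.support, cdDeg (FreeMonoid.toList w) = n) →
        ceMap Ψ = ceWord n Q →
        ∀ w : List Bool, cdDeg w = n →
          Ψ.coeff (FreeMonoid.ofList w)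
            = if EvenlyContains (dSupp w 1) Q then (-2 : ℚ) ^ dCount w else 0) ∧
    (∀ (L : Finset ℕ → ℚ) (Φ : CDRing),
      (∀ w ∈ Φ.coeff.support, cdDeg (FreeMonoid.toList w) = n) →
      (∀ Q : Finset ℕ, ¬ IsEvenSet Q → L Q = 0) →
      ceMap Φ = ∑ Q ∈ (Finset.Icc 1 n).powerset, L Q • ceWord n Q →
      ∀ w : List Bool, cdDeg w = n →
        Φ.coeff (FreeMonoid.ofList w)
          = (-2 : ℚ) ^ dCount w *
            ∑ Q ∈ (Finset.Icc 1 n).powerset,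
              (if EvenlyContains (dSupp w 1) Q then L Q else 0)) := by
  refine ⟨fun Q hQ _ Ψ _ hΨ w hw => ?_, fun L Φ _ _ hΦ w hw => ?_⟩
  · rw [← cdExpandLin_ceMap Ψ, hΨ, coeff_cdExpandLin_ceWord hQ hw]
  · rw [← cdExpandLin_ceMap Φ, hΦ, map_sum, MonoidAlgebra.coeff_sum, Finsupp.finsetSum_apply,
      mul_sum]
    refine sum_congr rfl fun Q hQ => ?_
    rw [map_smul, MonoidAlgebra.coeff_smul, Finsupp.smul_apply, smul_eq_mul,
      coeff_cdExpandLin_ceWord (mem_powerset.mp hQ) hw]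
    split_ifs <;> ring
end

section
/- For every rank n+1 Eulerian poset P and every T ⊆ V ⊆ [1,n] such that every maximal interval of V contains at most one element of T, the inequality (−1)^{|T|} Σ_{T⊆Q⊆V} L_Q(P) ≥ 0 implies: the cd-index coefficient [c d c^{n−3}]_P = (−2) Σ_{{2,3} ⊆_e Q} L_Q(P) = −2 Σ_{{2}⊆Q⊆[2,n]} L_Q(P) ≥ 0, using that L_Q(P) = 0 unless Q is an even set and that Q is even with {2,3} ⊆_e Q iff Q is even with {2} ⊆ Q ⊆ [2,n]. -/
open Finset
open scoped Classical

/-!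
An even set is a disjoint union of even-length intervals, so the block containing its
least element `x` has the form `[x, b]` with `b ≥ x + 1`. Hence for even `Q ⊆ [1, n]`, `{2, 3} ⊆ₑ Q`
forces `1 ∉ Q` (otherwise `1` would be the least element of the even set `Q \ {2, 3}`,
which would then contain `2`), and conversely if `2` is the least element of `Q` then
its block starts with `2, 3` and removing them leaves an even set. Since `L` vanishes
off even sets, the coefficient is `−2 ∑_{2 ∈ Q ⊆ [2, n]} L Q`, which is the instance
`T = {2}`, `V = [2, n]` of the inequality, up to the factor `2`.
-/

theorem isEvenSet_Icc {a b : ℕ} (h : Even (Finset.Icc a b).card) : IsEvenSet (Finset.Icc a b) :=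
  ⟨{Finset.Icc a b}, by simpa [IsInterval] using h, by simp, (sup_singleton ..).symm⟩

namespace IsEvenSet

theorem union_s19 {A B : Finset ℕ} (hA : IsEvenSet A) (hB : IsEvenSet B) (hAB : Disjoint A B) :
    IsEvenSet (A ∪ B) := by
  obtain ⟨𝒥, h𝒥, h𝒥disj, rfl⟩ := hA
  obtain ⟨𝒦, h𝒦, h𝒦disj, rfl⟩ := hB
  refine ⟨𝒥 ∪ 𝒦, fun J hJ => (mem_union.1 hJ).elim (h𝒥 J) (h𝒦 J), ?_, (sup_union ..).symm⟩
  rw [coe_union, Set.pairwiseDisjoint_union]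
  exact ⟨h𝒥disj, h𝒦disj, fun J hJ K hK _ => hAB.mono (le_sup (f := id) hJ) (le_sup (f := id) hK)⟩

theorem exists_block_of_min {Q : Finset ℕ} (hQ : IsEvenSet Q) {x : ℕ} (hx : x ∈ Q)
    (hmin : ∀ y ∈ Q, x ≤ y) :
    ∃ b, x + 1 ≤ b ∧ Finset.Icc x b ⊆ Q ∧ Even (Finset.Icc x b).card ∧
      IsEvenSet (Q \ Finset.Icc x b) := by
  obtain ⟨𝒥, h𝒥, hdisj, rfl⟩ := hQ
  obtain ⟨J, hJ, hxJ⟩ := mem_sup.1 hx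
  obtain ⟨⟨a, b, rfl⟩, heven⟩ := h𝒥 J hJ
  have hsub : Finset.Icc a b ⊆ 𝒥.sup id := le_sup (f := id) hJ
  rw [id, mem_Icc] at hxJ
  obtain rfl : x = a := le_antisymm (hmin a (hsub (left_mem_Icc.2 (hxJ.1.trans hxJ.2)))) hxJ.1
  have hb : x + 1 ≤ b := by
    obtain ⟨k, hk⟩ := heven
    rw [Nat.card_Icc] at hk
    omega
  refine ⟨b, hb, hsub, heven, 𝒥.erase (Finset.Icc x b),
    fun K hK => h𝒥 K (mem_of_mem_erase hK), hdisj.subset (by simp), ?_⟩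
  have hrest : Disjoint (Finset.Icc x b) ((𝒥.erase (Finset.Icc x b)).sup id) :=
    Finset.disjoint_sup_right.2 fun K hK => hdisj hJ (mem_of_mem_erase hK) (ne_of_mem_erase hK).symm
  conv_lhs => rw [← insert_erase hJ, sup_insert, id, sup_eq_union]
  rw [union_sdiff_left, sdiff_eq_self_of_disjoint hrest.symm]

theorem succ_mem_of_min {Q : Finset ℕ} (hQ : IsEvenSet Q) {x : ℕ} (hx : x ∈ Q)
    (hmin : ∀ y ∈ Q, x ≤ y) : x + 1 ∈ Q := by
  obtain ⟨b, hb, hsub, -⟩ := hQ.exists_block_of_min hx hmin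
  exact hsub (mem_Icc.2 ⟨x.le_succ, hb⟩)

theorem sdiff_pair_of_min {Q : Finset ℕ} (hQ : IsEvenSet Q) {x : ℕ} (hx : x ∈ Q)
    (hmin : ∀ y ∈ Q, x ≤ y) : IsEvenSet (Q \ {x, x + 1}) := by
  obtain ⟨b, hb, hsub, heven, hrest⟩ := hQ.exists_block_of_min hx hmin
  have htail : Even (Finset.Icc (x + 2) b).card := by
    obtain ⟨k, hk⟩ := heven
    exact ⟨k - 1, by simp only [Nat.card_Icc] at hk ⊢; omega⟩
  have hsplit : Q \ {x, x + 1} = (Q \ Finset.Icc x b) ∪ Finset.Icc (x + 2) b := by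
    ext y
    have hblock := @hsub y
    have hlow := hmin y
    simp only [mem_sdiff, mem_union, mem_insert, mem_singleton, mem_Icc] at hblock hlow ⊢
    grind
  rw [hsplit]
  exact hrest.union_s19 (isEvenSet_Icc htail) (disjoint_sdiff_self_left.mono_right
    (Icc_subset_Icc_left (by omega)))

end IsEvenSet

theorem evenlyContains_pair_iff {m n : ℕ} {Q : Finset ℕ} (hQ : IsEvenSet Q)
    (hQmn : Q ⊆ Finset.Icc m n) :
    EvenlyContains {m + 1, m + 2} Q ↔ m + 1 ∈ Q ∧ Q ⊆ Finset.Icc (m + 1) n := by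
  constructor
  · rintro ⟨-, -, hpair, hrest⟩
    have hm1 : m + 1 ∈ Q := hpair (mem_insert_self ..)
    have hm : m ∉ Q := by
      intro hm
      have hmin : ∀ y ∈ Q \ {m + 1, m + 2}, m ≤ y := fun y hy =>
        (mem_Icc.1 (hQmn (mem_sdiff.1 hy).1)).1
      simpa using hrest.succ_mem_of_min (by simp [hm]) hmin
    refine ⟨hm1, fun y hy => mem_Icc.2 ?_⟩
    have hy' := mem_Icc.1 (hQmn hy)
    have hym : y ≠ m := fun h => hm (h ▸ hy)
    omega
  · rintro ⟨hm1, hQ'⟩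
    have hmin : ∀ y ∈ Q, m + 1 ≤ y := fun y hy => (mem_Icc.1 (hQ' hy)).1
    refine ⟨?_, hQ, ?_, hQ.sdiff_pair_of_min hm1 hmin⟩
    · rw [show ({m + 1, m + 2} : Finset ℕ) = Finset.Icc (m + 1) (m + 2) by ext; simp only [mem_insert, mem_singleton, mem_Icc]; omega]
      exact isEvenSet_Icc (by simp)
    · exact insert_subset hm1 (singleton_subset_iff.2 (hQ.succ_mem_of_min hm1 hmin))

theorem sum_evenlyContains_pair_eq {m n : ℕ} (L : Finset ℕ → ℚ)
    (hL : ∀ Q ⊆ Finset.Icc m n, ¬ IsEvenSet Q → L Q = 0) :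
    ∑ Q ∈ (Finset.Icc m n).powerset, (if EvenlyContains {m + 1, m + 2} Q then L Q else 0)
      = ∑ Q ∈ (Finset.Icc (m + 1) n).powerset, if m + 1 ∈ Q then L Q else 0 := by
  calc _ = ∑ Q ∈ (Finset.Icc m n).powerset,
        (if m + 1 ∈ Q ∧ Q ⊆ Finset.Icc (m + 1) n then L Q else 0) := by
        refine sum_congr rfl fun Q hQ => ?_
        by_cases he : IsEvenSet Q
        · exact if_congr (evenlyContains_pair_iff he (mem_powerset.1 hQ)) rfl rfl
        · simp [hL Q (mem_powerset.1 hQ) he]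
    _ = _ := by
        rw [← sum_filter, ← sum_filter]
        congr 1
        ext Q
        simp only [mem_filter, mem_powerset]
        exact ⟨fun h => ⟨h.2.2, h.2.1⟩,
          fun h => ⟨h.1.trans (Icc_subset_Icc_left m.le_succ), h.2, h.1⟩⟩

/-- Nonnegativity of the coefficient of `c d c^{n-3}`.  Let `L` be the
`L`-vector of a rank `n+1` Eulerian poset (`n ≥ 3`): `L Q = 0` unless `Q` is an
even subset of `[1,n]`, and (Inequality Lemma) `(−1)^{|T|} ∑_{T ⊆ Q ⊆ V} L Q ≥ 0`
whenever `T ⊆ V ⊆ [1,n]` and every interval of `V` meets `T` in at most one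
element.  Then, using that for even `Q ⊆ [1,n]` one has
`{2,3} ⊆ₑ Q ↔ (2 ∈ Q ∧ Q ⊆ [2,n])`, the cd-index coefficient
`[c d c^{n-3}] = (−2) ∑_{{2,3} ⊆ₑ Q} L Q = −2 ∑_{2 ∈ Q ⊆ [2,n]} L Q` is
nonnegative. -/
theorem cdc_coefficient_nonneg (n : ℕ) (hn : 3 ≤ n) (L : Finset ℕ → ℚ)
    (hsupp : ∀ Q : Finset ℕ, ¬ (IsEvenSet Q ∧ Q ⊆ Finset.Icc 1 n) → L Q = 0)
    (hineq : ∀ T V : Finset ℕ, T ⊆ V → V ⊆ Finset.Icc 1 n →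
      (∀ a b : ℕ, Finset.Icc a b ⊆ V → (Finset.Icc a b ∩ T).card ≤ 1) →
      0 ≤ (-1 : ℚ) ^ T.card * ∑ Q ∈ V.powerset, (if T ⊆ Q then L Q else 0)) :
    (∀ Q : Finset ℕ, IsEvenSet Q → Q ⊆ Finset.Icc 1 n →
      (EvenlyContains {2, 3} Q ↔ (2 ∈ Q ∧ Q ⊆ Finset.Icc 2 n))) ∧
    (-2 : ℚ) * (∑ Q ∈ (Finset.Icc 1 n).powerset,
        if EvenlyContains {2, 3} Q then L Q else 0)
      = -2 * (∑ Q ∈ (Finset.Icc 2 n).powerset, if 2 ∈ Q then L Q else 0) ∧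
    0 ≤ (-2 : ℚ) * (∑ Q ∈ (Finset.Icc 1 n).powerset,
        if EvenlyContains {2, 3} Q then L Q else 0) := by
  have hsum := sum_evenlyContains_pair_eq (m := 1) (n := n) L fun Q _ hQ => hsupp Q fun h => hQ h.1
  have hpos := hineq {2} (Finset.Icc 2 n) (by simp; omega) (Icc_subset_Icc_left (by norm_num))
    fun a b _ => (card_le_card inter_subset_right).trans (card_singleton 2).le
  simp only [card_singleton, pow_one, singleton_subset_iff] at hpos
  exact ⟨fun Q hQ hQn => evenlyContains_pair_iff hQ hQn, by rw [hsum], by rw [hsum]; linarith⟩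
end
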